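/- arXiv:2408.11786 — 2 statements merged into one kernel-verified Lean document; each statement's English description precedes it below -/
import Mathlib

section
/- Let T be a set of (k+1)-element subsets of [n] with |T| = m3 and det ∂̂_{•,T} ≠ 0 (a ℚ-acyclic complex). Then det(∂̂_{•,T})² ≤ ((k+1)/n)^{m1} · (k+1)^{m2}; in particular |H̃_{k−1}(T)|² ≤ ((k+1)/n)^{m1}(k+1)^{m2}, improving Kalai's bound (k+1)^{m2}. -/
open Matrix

/-- The `j`-element subsets of the vertex set `[n]` (modelled as `Fin n`). -/
abbrev Face (n j : ℕ) := {s : Finset (Fin n) // s.card = j}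

/-- The `j`-element subsets of `[n]` not containing the last vertex `n`
(the vertex of `Fin n` with value `n - 1`). -/
abbrev HFace (n j : ℕ) :=
  {s : Finset (Fin n) // s.card = j ∧ ∀ a ∈ s, (a : ℕ) < n - 1}

/-- The `k`-dimensional boundary matrix `∂`: rows indexed by `k`-subsets `σ`,
columns by `(k+1)`-subsets `τ`; the entry is `(-1)^m` if `σ = τ \ {τ_m}`
(where `τ = {τ_0 < ⋯ < τ_k}`), and `0` otherwise. -/
noncomputable def bdry (n k : ℕ) : Matrix (Face n k) (Face n (k+1)) ℝ :=
  fun σ τ => ∑ a ∈ τ.1,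
    if σ.1 = τ.1.erase a then (-1 : ℝ) ^ ((τ.1.filter (fun b => b < a)).card) else 0

/-- The submatrix `∂̂` of `∂` consisting of the rows indexed by `k`-subsets
not containing the vertex `n`. -/
noncomputable def bdryHat (n k : ℕ) : Matrix (HFace n k) (Face n (k+1)) ℝ :=
  fun σ τ => bdry n k ⟨σ.1, σ.2.1⟩ τ

/-- The submatrix `M_{•,T}` of `M` with columns restricted to `T`. -/
def colSub {ι κ : Type*} (M : Matrix ι κ ℝ) (T : Finset κ) :
    Matrix ι {τ // τ ∈ T} ℝ :=
  fun i t => M i t.1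

/- The squared determinant of a matrix whose row and column index types are in
bijection (`0` if there is no bijection); independent of the chosen bijection. -/
open scoped Classical in
noncomputable def detSq {ι κ : Type*} [Fintype ι] [DecidableEq ι] [Fintype κ]
    (M : Matrix ι κ ℝ) : ℝ :=
  if h : Nonempty (ι ≃ κ) then ((M.submatrix id h.some).det) ^ 2 else 0

/-- The degree `d_i(T)`: the number of members of `T` containing the vertex `i`. -/
def deg (n k : ℕ) (T : Finset (Face n (k+1))) (i : Fin n) : ℕ :=
  (T.filter (fun τ => i ∈ τ.1)).card

/-- The diagonal matrix `X_j` indexed by `j`-subsets, with entries `∏_{i∈σ} x_i`. -/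
noncomputable def Xdiag (n j : ℕ) (x : Fin n → ℝ) :
    Matrix (Face n j) (Face n j) ℝ :=
  Matrix.diagonal (fun σ => ∏ i ∈ σ.1, x i)

/-!
Write `n = m + 1` and index the rows of `∂̂` by the `k`-faces of `[m]`; let `L = ∂̂ ∂̂ᵀ`.
Restricting the Laplacian identity `∂_k ∂_kᵀ + ∂_{k-1}ᵀ ∂_{k-1} = n I` to these rows gives
`L = n I - ∂'ᵀ ∂'`, where `∂'` is the boundary matrix of the simplex on `[m]`. Since
`∂ ∂ᵀ ∂ = n ∂` on any simplex, `∂'ᵀ ∂' / m` is an orthogonal projection, of trace `C(m-1, k-1)`,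
hence `det L = n ^ C(m-1, k)`. Likewise `∂ᵀ ∂ / n` is an orthogonal projection; it fixes the
row space of `∂̂` and has the same trace `C(m, k)` as the projection `∂̂ᵀ L⁻¹ ∂̂` onto it, so
`∂̂ᵀ L⁻¹ ∂̂ = ∂ᵀ ∂ / n`. For a square column selection `A` of `∂̂` this gives
`det A ^ 2 = det L * det (Aᵀ L⁻¹ A)`, where `Aᵀ L⁻¹ A` is positive semidefinite with all diagonal
entries `(k+1)/n`, and AM-GM on its eigenvalues bounds its determinant by `((k+1)/n) ^ C(m, k)`.
-/

open Finset

section LinearAlgebra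

variable {ι κ : Type*}

lemma Matrix.isSelfAdjoint_iff_transpose_eq {A : Matrix ι ι ℝ} : IsSelfAdjoint A ↔ Aᵀ = A := by
  rw [IsSelfAdjoint, star_eq_conjTranspose, conjTranspose_eq_transpose_of_trivial]

lemma Matrix.submatrix_transpose_mul_mul {γ : Type*} [Fintype ι] [Fintype κ]
    (B : Matrix ι κ ℝ) (X : Matrix ι ι ℝ) (f : γ → κ) :
    (Bᵀ * X * B).submatrix f f = (B.submatrix id f)ᵀ * X * B.submatrix id f := by
  rw [transpose_submatrix, ← submatrix_id_id X, ← submatrix_mul _ _ _ _ _ Function.bijective_id,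
    ← submatrix_mul _ _ _ _ _ Function.bijective_id, submatrix_id_id]

lemma IsStarProjection.eq_of_mul_eq_of_trace_eq [Fintype ι] {P Q : Matrix ι ι ℝ}
    (hP : IsStarProjection P) (hQ : IsStarProjection Q) (hQP : Q * P = P)
    (htr : P.trace = Q.trace) : P = Q := by
  have hF := hP.sub_of_mul_eq_right hQ hQP
  have hpsd : (Q - P).PosSemidef := by
    have := posSemidef_conjTranspose_mul_self (Q - P)
    rwa [← star_eq_conjTranspose, hF.isSelfAdjoint.star_eq, hF.isIdempotentElem.eq] at this
  exact (sub_eq_zero.mp (hpsd.trace_eq_zero_iff.mp (by rw [trace_sub, htr, sub_self]))).symm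

lemma isStarProjection_transpose_mul_inv_mul [Fintype ι] [Fintype κ] [DecidableEq κ]
    {B : Matrix κ ι ℝ} (hB : IsUnit (B * Bᵀ).det) :
    IsStarProjection (Bᵀ * (B * Bᵀ)⁻¹ * B) := by
  refine ⟨?_, isSelfAdjoint_iff_transpose_eq.mpr ?_⟩
  · calc Bᵀ * (B * Bᵀ)⁻¹ * B * (Bᵀ * (B * Bᵀ)⁻¹ * B)
        = Bᵀ * ((B * Bᵀ)⁻¹ * (B * Bᵀ)) * (B * Bᵀ)⁻¹ * B := by simp only [Matrix.mul_assoc]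
      _ = Bᵀ * (B * Bᵀ)⁻¹ * B := by rw [nonsing_inv_mul _ hB, Matrix.mul_one]
  · rw [transpose_mul, transpose_mul, transpose_transpose, transpose_nonsing_inv, transpose_mul,
      transpose_transpose, Matrix.mul_assoc]

lemma trace_transpose_mul_inv_mul [Fintype ι] [Fintype κ] [DecidableEq κ]
    {B : Matrix κ ι ℝ} (hB : IsUnit (B * Bᵀ).det) :
    (Bᵀ * (B * Bᵀ)⁻¹ * B).trace = Fintype.card κ := by
  rw [trace_mul_comm, ← Matrix.mul_assoc, mul_nonsing_inv _ hB, trace_one]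

lemma isStarProjection_inv_smul_transpose_mul_self [Fintype ι] [Fintype κ]
    {B : Matrix κ ι ℝ} {c : ℝ} (hc : c ≠ 0) (hB : B * Bᵀ * B = c • B) :
    IsStarProjection (c⁻¹ • (Bᵀ * B)) := by
  refine ⟨?_, isSelfAdjoint_iff_transpose_eq.mpr ?_⟩
  · calc c⁻¹ • (Bᵀ * B) * c⁻¹ • (Bᵀ * B) = (c⁻¹ * c⁻¹) • (Bᵀ * (B * Bᵀ * B)) := by
          simp only [Matrix.smul_mul, Matrix.mul_smul, smul_smul, Matrix.mul_assoc]
      _ = c⁻¹ • (Bᵀ * B) := by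
          rw [hB, Matrix.mul_smul, smul_smul, inv_mul_cancel_right₀ hc]
  · rw [transpose_smul, transpose_mul, transpose_transpose]

lemma IsStarProjection.det_smul_one_add_smul [Fintype ι] [DecidableEq ι] {P : Matrix ι ι ℝ}
    (hP : IsStarProjection P) {r : ℕ} (hr : P.trace = r) (a b : ℝ) :
    (a • 1 + b • P).det = (a + b) ^ r * a ^ (Fintype.card ι - r) := by
  have hH : P.IsHermitian := hP.isSelfAdjoint
  have hμ : ∀ i, hH.eigenvalues i = 1 ∨ hH.eigenvalues i = 0 := fun i => by
    have := hP.isIdempotentElem.spectrum_subset ℝ (hH.eigenvalues_mem_spectrum_real i)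
    simp only [Set.mem_insert_iff, Set.mem_singleton_iff] at this
    tauto
  have hcard : (univ.filter fun i => hH.eigenvalues i = 1).card = r := by
    have htr : ((univ.filter fun i => hH.eigenvalues i = 1).card : ℝ) = r := by
      rw [← hr, hH.trace_eq_sum_eigenvalues, ← sum_boole]
      exact sum_congr rfl fun i _ => by rcases hμ i with h | h <;> simp [h]
    exact_mod_cast htr
  have hcompl : (univ.filter fun i => ¬hH.eigenvalues i = 1).card = Fintype.card ι - r := by
    rw [filter_not, card_sdiff_of_subset (filter_subset _ _), hcard, card_univ]
  have hdet : (a • 1 + b • P).det = ∏ i, (a + b * hH.eigenvalues i) := by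
    conv_lhs => rw [hH.spectral_theorem]
    rw [← map_one (Unitary.conjStarAlgAut ℝ _ hH.eigenvectorUnitary), ← map_smul, ← map_smul,
      ← map_add, det_map, smul_one_eq_diagonal, ← diagonal_smul, diagonal_add, det_diagonal]
    simp
  rw [hdet, ← prod_filter_mul_prod_filter_not univ fun i => hH.eigenvalues i = 1, ← hcompl,
    ← hcard, ← prod_const, ← prod_const]
  congr 1 <;> refine prod_congr rfl fun i hi => ?_
  · rw [(mem_filter.mp hi).2, mul_one]
  · rw [(hμ i).resolve_left (mem_filter.mp hi).2, mul_zero, add_zero]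

lemma Matrix.PosSemidef.det_le_trace_div_card_pow [Fintype ι] [DecidableEq ι]
    {W : Matrix ι ι ℝ} (hW : W.PosSemidef) :
    W.det ≤ (W.trace / Fintype.card ι) ^ Fintype.card ι := by
  rcases isEmpty_or_nonempty ι with hι | hι
  · simp
  set N := Fintype.card ι
  have hN : (N : ℝ) ≠ 0 := Nat.cast_ne_zero.mpr Fintype.card_ne_zero
  set μ := hW.1.eigenvalues
  have hμ : ∀ i ∈ univ, 0 ≤ μ i := fun i _ => hW.eigenvalues_nonneg i
  have hamgm := Real.geom_mean_le_arith_mean_weighted univ (fun _ => (N : ℝ)⁻¹) μ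
    (fun _ _ => by positivity) (by simp [N, hN]) hμ
  have hdet : W.det = (∏ i, μ i ^ (N : ℝ)⁻¹) ^ N := by
    rw [hW.1.det_eq_prod_eigenvalues, ← prod_pow]
    refine prod_congr rfl fun i _ => ?_
    rw [← Real.rpow_natCast, ← Real.rpow_mul (hμ i (mem_univ i)), inv_mul_cancel₀ hN,
      Real.rpow_one]
    rfl
  calc W.det = (∏ i, μ i ^ (N : ℝ)⁻¹) ^ N := hdet
    _ ≤ (∑ i, (N : ℝ)⁻¹ * μ i) ^ N :=
        pow_le_pow_left₀ (prod_nonneg fun i hi => Real.rpow_nonneg (hμ i hi) _) hamgm N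
    _ = (W.trace / N) ^ N := by
        rw [← mul_sum, hW.1.trace_eq_sum_eigenvalues, inv_mul_eq_div]
        rfl

end LinearAlgebra

lemma Finset.exists_eq_insert_insert {α : Type*} [DecidableEq α] {s t : Finset α} (h : s ⊆ t)
    (hc : t.card = s.card + 2) : ∃ x y, x ∉ s ∧ y ∉ s ∧ x ≠ y ∧ t = insert x (insert y s) := by
  obtain ⟨x, y, hxy, he⟩ := card_eq_two.mp (show (t \ s).card = 2 by
    rw [card_sdiff_of_subset h]; omega)
  have hx : x ∈ t \ s := he ▸ mem_insert_self x _
  have hy : y ∈ t \ s := he ▸ mem_insert_of_mem (mem_singleton_self y)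
  refine ⟨x, y, (mem_sdiff.mp hx).2, (mem_sdiff.mp hy).2, hxy, ?_⟩
  rw [← sdiff_union_of_subset h, he, insert_union, singleton_union]

section Boundary

variable {n j : ℕ}

lemma Face.card_eq_choose (n j : ℕ) : Fintype.card (Face n j) = n.choose j := by
  rw [Fintype.card_finset_len, Fintype.card_fin]

lemma Face.exists_eq_insert {σ : Face n j} {τ : Face n (j+1)} (h : σ.1 ⊆ τ.1) :
    ∃ a ∉ σ.1, τ.1 = insert a σ.1 := by
  obtain ⟨a, ha, he⟩ := exists_eq_insert_iff.mpr ⟨h, by rw [σ.2, τ.2]⟩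
  exact ⟨a, ha, he.symm⟩

lemma Face.card_inter_lt {σ σ' : Face n j} (hne : σ ≠ σ') : (σ.1 ∩ σ'.1).card < j := by
  refine ((card_le_card inter_subset_left).trans_eq σ.2).lt_of_ne fun h => hne ?_
  have h' : σ.1 ∩ σ'.1 = σ.1 := eq_of_subset_of_card_le inter_subset_left (by rw [h, σ.2])
  exact Subtype.ext (eq_of_subset_of_card_le (h' ▸ inter_subset_right) (by rw [σ.2, σ'.2]))

lemma Face.card_supersets (σ : Face n j) :
    (univ.filter fun τ : Face n (j+1) => σ.1 ⊆ τ.1).card = n - j := by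
  rw [← show σ.1ᶜ.card = n - j by rw [card_compl, Fintype.card_fin, σ.2]]
  refine (card_bij
    (fun a ha => ⟨insert a σ.1, by rw [card_insert_of_notMem (mem_compl.mp ha), σ.2]⟩)
    (fun a _ => mem_filter.mpr ⟨mem_univ _, subset_insert a σ.1⟩) (fun a ha b _ hab => ?_)
    fun τ hτ => ?_).symm
  · exact (insert_inj (mem_compl.mp ha)).mp (congrArg Subtype.val hab)
  · obtain ⟨a, ha, hτ⟩ := Face.exists_eq_insert (mem_filter.mp hτ).2
    exact ⟨a, mem_compl.mpr ha, Subtype.ext hτ.symm⟩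

lemma Face.card_subfaces (τ : Face n (j+1)) :
    (univ.filter fun ρ : Face n j => ρ.1 ⊆ τ.1).card = j + 1 := by
  conv_rhs => rw [← τ.2]
  refine (card_bij (fun a ha => ⟨τ.1.erase a, by rw [card_erase_of_mem ha, τ.2]; rfl⟩)
    (fun a _ => mem_filter.mpr ⟨mem_univ _, erase_subset a τ.1⟩) (fun a ha b _ hab => ?_)
    fun ρ hρ => ?_).symm
  · exact (erase_inj _ ha).mp (congrArg Subtype.val hab)
  · obtain ⟨a, ha, hτ⟩ := Face.exists_eq_insert (mem_filter.mp hρ).2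
    exact ⟨a, hτ ▸ mem_insert_self a _, Subtype.ext (by simp [hτ, erase_insert ha])⟩

/-- `(-1) ^ i` for `a = s_i`: the sign of `s \ {a}` in the boundary of `s`. -/
noncomputable def bdrySign (s : Finset (Fin n)) (a : Fin n) : ℝ :=
  (-1) ^ (s.filter (· < a)).card

lemma bdrySign_mul_self (s : Finset (Fin n)) (a : Fin n) : bdrySign s a * bdrySign s a = 1 := by
  rw [bdrySign, ← pow_add, Even.neg_one_pow ⟨_, rfl⟩]

lemma bdrySign_insert_self (s : Finset (Fin n)) (a : Fin n) :
    bdrySign (insert a s) a = bdrySign s a := by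
  rw [bdrySign, filter_insert, if_neg (lt_irrefl a), bdrySign]

lemma bdrySign_insert_of_lt {s : Finset (Fin n)} {a b : Fin n} (hb : b ∉ s) (hba : b < a) :
    bdrySign (insert b s) a = -bdrySign s a := by
  rw [bdrySign, filter_insert, if_pos hba, card_insert_of_notMem (by simp [hb]), pow_succ,
    bdrySign, mul_neg_one]

lemma bdrySign_insert_of_gt {s : Finset (Fin n)} {a b : Fin n} (hab : a < b) :
    bdrySign (insert b s) a = bdrySign s a := by
  rw [bdrySign, filter_insert, if_neg hab.not_gt, bdrySign]

lemma bdrySign_insert_insert {s : Finset (Fin n)} {x y : Fin n} (hx : x ∉ s) (hy : y ∉ s)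
    (hxy : x ≠ y) :
    bdrySign (insert x (insert y s)) x * bdrySign (insert x (insert y s)) y
      = -(bdrySign (insert x s) x * bdrySign (insert y s) y) := by
  wlog hlt : x < y generalizing x y
  · rw [insert_comm, mul_comm, this hy hx hxy.symm (hxy.symm.lt_of_le (not_lt.mp hlt)),
      mul_comm]
  rw [bdrySign_insert_self, bdrySign_insert_of_gt hlt,
    bdrySign_insert_of_lt (by simp [hx, hxy]) hlt, bdrySign_insert_self, bdrySign_insert_self]
  ring

lemma bdry_eq_bdrySign {σ : Face n j} {τ : Face n (j+1)} {a : Fin n} (ha : a ∉ σ.1)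
    (hτ : τ.1 = insert a σ.1) : bdry n j σ τ = bdrySign τ.1 a := by
  have hσ : σ.1 = τ.1.erase a := by rw [hτ, erase_insert ha]
  rw [bdry, sum_eq_single_of_mem a (hτ ▸ mem_insert_self a _) fun b hb hba => if_neg fun h =>
    hba ((erase_inj _ hb).mp (h.symm.trans hσ)), if_pos hσ, bdrySign]

lemma bdry_eq_zero_of_not_subset {σ : Face n j} {τ : Face n (j+1)} (h : ¬ σ.1 ⊆ τ.1) :
    bdry n j σ τ = 0 :=
  sum_eq_zero fun a _ => if_neg fun he => h (by rw [he]; exact erase_subset a τ.1)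

lemma subset_of_bdry_ne_zero {σ : Face n j} {τ : Face n (j+1)} (h : bdry n j σ τ ≠ 0) :
    σ.1 ⊆ τ.1 :=
  not_not.mp (mt bdry_eq_zero_of_not_subset h)

lemma bdry_mul_self (σ : Face n j) (τ : Face n (j+1)) :
    bdry n j σ τ * bdry n j σ τ = if σ.1 ⊆ τ.1 then 1 else 0 := by
  split_ifs with h
  · obtain ⟨a, ha, hτ⟩ := Face.exists_eq_insert h
    rw [bdry_eq_bdrySign ha hτ, bdrySign_mul_self]
  · rw [bdry_eq_zero_of_not_subset h, mul_zero]

lemma sum_bdry_mul_self_up (σ : Face n j) :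
    ∑ τ : Face n (j+1), bdry n j σ τ * bdry n j σ τ = ((n - j : ℕ) : ℝ) := by
  simp_rw [bdry_mul_self, sum_boole, Face.card_supersets]

lemma sum_bdry_mul_self_down (τ : Face n (j+1)) :
    ∑ ρ : Face n j, bdry n j ρ τ * bdry n j ρ τ = ((j + 1 : ℕ) : ℝ) := by
  simp_rw [bdry_mul_self, sum_boole, Face.card_subfaces]

lemma bdry_mul_bdry (j : ℕ) : bdry n j * bdry n (j+1) = 0 := by
  ext ρ u
  rw [mul_apply, Matrix.zero_apply]
  by_cases hρu : ρ.1 ⊆ u.1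
  swap
  · refine sum_eq_zero fun σ _ => ?_
    by_contra hne
    exact hρu ((subset_of_bdry_ne_zero (left_ne_zero_of_mul hne)).trans
      (subset_of_bdry_ne_zero (right_ne_zero_of_mul hne)))
  obtain ⟨x, y, hx, hy, hxy, hu⟩ := exists_eq_insert_insert hρu (by rw [ρ.2, u.2])
  let σx : Face n (j+1) := ⟨insert x ρ.1, by rw [card_insert_of_notMem hx, ρ.2]⟩
  let σy : Face n (j+1) := ⟨insert y ρ.1, by rw [card_insert_of_notMem hy, ρ.2]⟩
  have hσxy : σx ≠ σy := fun h => hxy ((insert_inj hx).mp (congrArg Subtype.val h))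
  rw [Fintype.sum_eq_add σx σy hσxy]
  · rw [bdry_eq_bdrySign hx rfl, bdry_eq_bdrySign hy rfl,
      bdry_eq_bdrySign (σ := σx) (a := y) (by simp [σx, hy, hxy.symm]) (by rw [hu, insert_comm]),
      bdry_eq_bdrySign (σ := σy) (a := x) (by simp [σy, hx, hxy]) hu]
    have key : bdrySign u.1 x * bdrySign u.1 y = -(bdrySign σx.1 x * bdrySign σy.1 y) := by
      rw [hu]; exact bdrySign_insert_insert hx hy hxy
    -- the two chains `ρ ⊂ ρ ∪ {x} ⊂ u` and `ρ ⊂ ρ ∪ {y} ⊂ u` carry opposite signs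
    linear_combination (bdrySign u.1 x * bdrySign σx.1 x) * key
      - (bdrySign u.1 y * bdrySign σx.1 x) * bdrySign_mul_self u.1 x
      - (bdrySign u.1 x * bdrySign σy.1 y) * bdrySign_mul_self σx.1 x
  · rintro σ ⟨hσx, hσy⟩
    by_contra hne
    obtain ⟨a, ha, hσ⟩ := Face.exists_eq_insert (subset_of_bdry_ne_zero (left_ne_zero_of_mul hne))
    have hau : a ∈ u.1 :=
      subset_of_bdry_ne_zero (right_ne_zero_of_mul hne) (hσ ▸ mem_insert_self a _)
    rw [hu, mem_insert, mem_insert] at hau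
    rcases hau with rfl | rfl | hau
    · exact hσx (Subtype.ext hσ)
    · exact hσy (Subtype.ext hσ)
    · exact ha hau

lemma bdry_laplacian_apply_of_ne {σ σ' : Face n (j+1)} (hne : σ ≠ σ') :
    ∑ τ : Face n (j+2), bdry n (j+1) σ τ * bdry n (j+1) σ' τ
      + ∑ ρ : Face n j, bdry n j ρ σ * bdry n j ρ σ' = 0 := by
  have hinter := Face.card_inter_lt hne
  have hunion := card_union_add_card_inter σ.1 σ'.1
  rw [σ.2, σ'.2] at hunion
  have hup : ∀ τ : Face n (j+2), bdry n (j+1) σ τ * bdry n (j+1) σ' τ ≠ 0 →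
      σ.1 ∪ σ'.1 = τ.1 := fun τ h =>
    eq_of_subset_of_card_le (union_subset (subset_of_bdry_ne_zero (left_ne_zero_of_mul h))
      (subset_of_bdry_ne_zero (right_ne_zero_of_mul h))) (by rw [τ.2]; omega)
  have hdown : ∀ ρ : Face n j, bdry n j ρ σ * bdry n j ρ σ' ≠ 0 → ρ.1 = σ.1 ∩ σ'.1 := fun ρ h =>
    eq_of_subset_of_card_le (subset_inter (subset_of_bdry_ne_zero (left_ne_zero_of_mul h))
      (subset_of_bdry_ne_zero (right_ne_zero_of_mul h))) (by rw [ρ.2]; omega)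
  by_cases hcard : (σ.1 ∩ σ'.1).card = j
  swap
  · have hup0 : ∀ τ : Face n (j+2), bdry n (j+1) σ τ * bdry n (j+1) σ' τ = 0 := fun τ =>
      by_contra fun h => by have := congrArg card (hup τ h); rw [τ.2] at this; omega
    have hdown0 : ∀ ρ : Face n j, bdry n j ρ σ * bdry n j ρ σ' = 0 := fun ρ =>
      by_contra fun h => hcard (by rw [← hdown ρ h, ρ.2])
    simp [hup0, hdown0]
  let ρ : Face n j := ⟨σ.1 ∩ σ'.1, hcard⟩
  let τ : Face n (j+2) := ⟨σ.1 ∪ σ'.1, by omega⟩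
  rw [sum_eq_single τ (fun τ' _ hτ' => by_contra fun h => hτ' (Subtype.ext (hup τ' h).symm))
      (by simp),
    sum_eq_single ρ (fun ρ' _ hρ' => by_contra fun h => hρ' (Subtype.ext (hdown ρ' h))) (by simp)]
  obtain ⟨x, hx, hσ⟩ := Face.exists_eq_insert (σ := ρ) (τ := σ) inter_subset_left
  obtain ⟨y, hy, hσ'⟩ := Face.exists_eq_insert (σ := ρ) (τ := σ') inter_subset_right
  have hxy : x ≠ y := by rintro rfl; exact hne (Subtype.ext (hσ.trans hσ'.symm))
  have hτ : τ.1 = insert x (insert y ρ.1) := by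
    show σ.1 ∪ σ'.1 = _
    rw [hσ, hσ', insert_union, union_insert, union_self]
  rw [bdry_eq_bdrySign (σ := σ) (τ := τ) (a := y) (by simp [hσ, hy, hxy.symm])
      (by rw [hτ, hσ, insert_comm]),
    bdry_eq_bdrySign (σ := σ') (τ := τ) (a := x) (by simp [hσ', hx, hxy]) (by rw [hτ, hσ']),
    bdry_eq_bdrySign hx hσ,
    bdry_eq_bdrySign hy hσ']
  have key := bdrySign_insert_insert hx hy hxy
  rw [← hτ, ← hσ, ← hσ'] at key
  linear_combination key

lemma bdry_laplacian (j : ℕ) :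
    bdry n (j+1) * (bdry n (j+1))ᵀ + (bdry n j)ᵀ * bdry n j = (n : ℝ) • 1 := by
  ext σ σ'
  simp only [Matrix.add_apply, mul_apply, transpose_apply, Matrix.smul_apply, one_apply]
  split_ifs with h
  · subst h
    have hσn : j + 1 ≤ n := by simpa [σ.2] using card_le_univ σ.1
    rw [sum_bdry_mul_self_up, sum_bdry_mul_self_down, ← Nat.cast_add, Nat.sub_add_cancel hσn]
    simp
  · rw [bdry_laplacian_apply_of_ne h, smul_zero]

lemma bdry_mul_transpose_mul_bdry (j : ℕ) :
    bdry n j * (bdry n j)ᵀ * bdry n j = (n : ℝ) • bdry n j := by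
  cases j with
  | zero =>
    have h : bdry n 0 * (bdry n 0)ᵀ = (n : ℝ) • 1 := by
      ext σ σ'
      obtain rfl : σ = σ' := Subtype.ext (by rw [card_eq_zero.mp σ.2, card_eq_zero.mp σ'.2])
      simp [mul_apply, sum_bdry_mul_self_up]
    rw [h, Matrix.smul_mul, Matrix.one_mul]
  | succ j =>
    rw [eq_sub_of_add_eq (bdry_laplacian j), Matrix.sub_mul, Matrix.mul_assoc, bdry_mul_bdry,
      Matrix.mul_zero, sub_zero, Matrix.smul_mul, Matrix.one_mul]

lemma trace_transpose_mul_bdry (j : ℕ) :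
    ((bdry n j)ᵀ * bdry n j).trace = ((j + 1) * n.choose (j+1) : ℕ) := by
  simp only [trace, diag_apply, mul_apply, transpose_apply, sum_bdry_mul_self_down, sum_const,
    card_univ, Face.card_eq_choose, nsmul_eq_mul]
  push_cast
  ring

end Boundary

section LastVertex

variable {m j : ℕ}

def Face.castSucc (σ : Face m j) : Face (m+1) j :=
  ⟨σ.1.map Fin.castSuccEmb, by rw [card_map, σ.2]⟩

lemma Face.castSucc_injective : Function.Injective (Face.castSucc (m := m) (j := j)) :=
  fun _ _ h => Subtype.ext (map_injective _ (congrArg Subtype.val h))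

lemma Face.exists_castSucc_eq {ρ : Face (m+1) j}
    (h : ρ.1 ⊆ (univ : Finset (Fin m)).map Fin.castSuccEmb) : ∃ σ : Face m j, σ.castSucc = ρ := by
  obtain ⟨u, -, hu⟩ := subset_map_iff.mp h
  exact ⟨⟨u, by rw [← card_map Fin.castSuccEmb, ← hu, ρ.2]⟩, Subtype.ext hu.symm⟩

noncomputable def Face.castSuccEquiv (m j : ℕ) : Face m j ≃ HFace (m+1) j :=
  Equiv.ofBijective (fun σ => ⟨σ.castSucc.1, σ.castSucc.2, by simp [Face.castSucc]⟩) <| by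
    refine ⟨fun σ τ h => Face.castSucc_injective (Subtype.ext ?_), fun s => ?_⟩
    · exact congrArg (fun s : HFace (m+1) j => s.1) h
    obtain ⟨σ, hσ⟩ := Face.exists_castSucc_eq (ρ := ⟨s.1, s.2.1⟩) fun a ha =>
      mem_map.mpr ⟨⟨a, by simpa using s.2.2 a ha⟩, mem_univ _, rfl⟩
    exact ⟨σ, Subtype.ext (congrArg (fun ρ : Face (m+1) j => ρ.1) hσ)⟩

lemma bdry_castSucc (σ : Face m j) (τ : Face m (j+1)) :
    bdry (m+1) j σ.castSucc τ.castSucc = bdry m j σ τ := by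
  simp only [bdry, Face.castSucc, sum_map, ← map_erase, map_inj, filter_map, card_map]
  rfl

lemma transpose_mul_bdry_submatrix_castSucc :
    ((bdry (m+1) j)ᵀ * bdry (m+1) j).submatrix Face.castSucc Face.castSucc
      = (bdry m j)ᵀ * bdry m j := by
  ext σ σ'
  simp only [submatrix_apply, mul_apply, transpose_apply]
  refine (Fintype.sum_of_injective Face.castSucc Face.castSucc_injective _ _ (fun ρ hρ => ?_)
    fun ρ => by rw [bdry_castSucc, bdry_castSucc]).symm
  by_contra hne
  refine hρ (Face.exists_castSucc_eq ((subset_of_bdry_ne_zero (left_ne_zero_of_mul hne)).trans ?_))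
  exact map_subset_map.mpr (subset_univ _)

/-- `∂̂` for `n = m + 1` vertices, with its rows (the `j`-faces of `[m+1]` avoiding the last vertex)
indexed by the `j`-faces of `[m]`. -/
noncomputable def bdryHat' (m j : ℕ) : Matrix (Face m j) (Face (m+1) (j+1)) ℝ :=
  (bdry (m+1) j).submatrix Face.castSucc id

lemma bdryHat'_mul_transpose :
    bdryHat' m (j+1) * (bdryHat' m (j+1))ᵀ = ((m : ℝ) + 1) • 1 - (bdry m j)ᵀ * bdry m j := by
  rw [bdryHat', transpose_submatrix, ← submatrix_mul _ _ _ _ _ Function.bijective_id,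
    eq_sub_of_add_eq (bdry_laplacian j)]
  ext σ σ'
  rw [← transpose_mul_bdry_submatrix_castSucc (m := m)]
  simp [one_apply, Face.castSucc_injective.eq_iff]

lemma det_bdryHat'_mul_transpose (hjm : j + 1 ≤ m) :
    (bdryHat' m (j+1) * (bdryHat' m (j+1))ᵀ).det = ((m : ℝ) + 1) ^ (m-1).choose (j+1) := by
  have hm : (m : ℝ) ≠ 0 := by norm_cast; omega
  have hP :=
    isStarProjection_inv_smul_transpose_mul_self hm (bdry_mul_transpose_mul_bdry (n := m) j)
  have htr : ((m : ℝ)⁻¹ • ((bdry m j)ᵀ * bdry m j)).trace = ((m-1).choose j : ℕ) := by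
    rw [trace_smul, trace_transpose_mul_bdry, smul_eq_mul, inv_mul_eq_iff_eq_mul₀ hm]
    obtain ⟨m, rfl⟩ : ∃ m', m = m' + 1 := ⟨m - 1, by omega⟩
    rw [Nat.add_sub_cancel, mul_comm (j + 1), ← Nat.add_one_mul_choose_eq]
    push_cast
    ring
  rw [bdryHat'_mul_transpose, ← smul_inv_smul₀ hm ((bdry m j)ᵀ * bdry m j), sub_eq_add_neg,
    ← neg_smul, hP.det_smul_one_add_smul htr, Face.card_eq_choose,
    Nat.choose_eq_choose_pred_add (k := j+1) (by omega) j.succ_pos, Nat.add_sub_cancel,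
    Nat.add_sub_cancel_left]
  simp

lemma transpose_mul_inv_mul_bdryHat' (hjm : j + 1 ≤ m) :
    (bdryHat' m (j+1))ᵀ * (bdryHat' m (j+1) * (bdryHat' m (j+1))ᵀ)⁻¹ * bdryHat' m (j+1)
      = ((m : ℝ) + 1)⁻¹ • ((bdry (m+1) (j+1))ᵀ * bdry (m+1) (j+1)) := by
  set R := bdryHat' m (j+1)
  set B := bdry (m+1) (j+1)
  have hm : (m : ℝ) + 1 ≠ 0 := by positivity
  have hR : IsUnit (R * Rᵀ).det := by
    rw [det_bdryHat'_mul_transpose hjm]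
    exact (pow_pos (by positivity) _).ne'.isUnit
  have hB : B * Bᵀ * B = ((m : ℝ) + 1) • B := by
    rw [bdry_mul_transpose_mul_bdry, Nat.cast_succ]
  have hQR : ((m : ℝ) + 1)⁻¹ • (Bᵀ * B) * Rᵀ = Rᵀ := by
    have hBt := congrArg transpose hB
    rw [transpose_mul, transpose_mul, transpose_transpose, transpose_smul] at hBt
    rw [show R = B.submatrix Face.castSucc id from rfl, transpose_submatrix, Matrix.smul_mul,
      ← submatrix_id_id (Bᵀ * B), ← submatrix_mul _ _ _ _ _ Function.bijective_id,
      Matrix.mul_assoc, hBt]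
    ext
    simp [hm]
  refine (isStarProjection_transpose_mul_inv_mul hR).eq_of_mul_eq_of_trace_eq
    (isStarProjection_inv_smul_transpose_mul_self hm hB) ?_ ?_
  · simp only [← Matrix.mul_assoc, hQR]
  · rw [trace_transpose_mul_inv_mul hR, trace_smul, trace_transpose_mul_bdry, smul_eq_mul,
      eq_inv_mul_iff_mul_eq₀ hm, Face.card_eq_choose]
    exact_mod_cast (Nat.add_one_mul_choose_eq m (j+1)).trans (mul_comm _ _)

theorem sq_det_bdryHat'_submatrix_le (hjm : j + 1 ≤ m) (f : Face m (j+1) → Face (m+1) (j+2)) :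
    ((bdryHat' m (j+1)).submatrix id f).det ^ 2
      ≤ (((j : ℝ) + 2) / ((m : ℝ) + 1)) ^ (m-1).choose j * ((j : ℝ) + 2) ^ (m-1).choose (j+1) := by
  set R := bdryHat' m (j+1)
  set A := R.submatrix id f
  set W := (((m : ℝ) + 1)⁻¹ • ((bdry (m+1) (j+1))ᵀ * bdry (m+1) (j+1))).submatrix f f
  have hL := det_bdryHat'_mul_transpose hjm
  have hAW : Aᵀ * (R * Rᵀ)⁻¹ * A = W := by
    rw [← submatrix_transpose_mul_mul, transpose_mul_inv_mul_bdryHat' hjm]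
  have hdet : A.det ^ 2 = (R * Rᵀ).det * W.det := by
    rw [← hAW, det_mul, det_mul, det_transpose, det_nonsing_inv, Ring.inverse_eq_inv', hL]
    field_simp
  have hW : W.PosSemidef :=
    ((posSemidef_conjTranspose_mul_self (bdry (m+1) (j+1))).smul (by positivity)).submatrix f
  have htr : W.trace = m.choose (j+1) * (((j : ℝ) + 2) / ((m : ℝ) + 1)) := by
    simp only [W, trace, diag_apply, submatrix_apply, Matrix.smul_apply, mul_apply,
      transpose_apply, sum_bdry_mul_self_down, sum_const, card_univ, Face.card_eq_choose,
      smul_eq_mul, nsmul_eq_mul]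
    push_cast
    ring
  have hN : (m.choose (j+1) : ℝ) ≠ 0 := Nat.cast_ne_zero.mpr (Nat.choose_pos hjm).ne'
  have hdetW : W.det ≤ (((j : ℝ) + 2) / ((m : ℝ) + 1)) ^ m.choose (j+1) := by
    simpa [Face.card_eq_choose, htr, mul_div_cancel_left₀ _ hN] using
      hW.det_le_trace_div_card_pow
  calc A.det ^ 2 = (R * Rᵀ).det * W.det := hdet
    _ ≤ ((m : ℝ) + 1) ^ (m-1).choose (j+1) * (((j : ℝ) + 2) / ((m : ℝ) + 1)) ^ m.choose (j+1) := by
        rw [hL]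
        gcongr
    _ = _ := by
        rw [Nat.choose_eq_choose_pred_add (n := m) (k := j+1) (by omega) j.succ_pos,
          Nat.add_sub_cancel, pow_add,
          div_pow (n := (m-1).choose (j+1))]
        field_simp

end LastVertex

theorem simple_uniform_bound_general (n k : ℕ) (hk : 1 ≤ k) (hn : k < n)
    (T : Finset (Face n (k+1))) :
    detSq (colSub (bdryHat n k) T)
      ≤ (((k : ℝ) + 1) / (n : ℝ)) ^ ((n-2).choose (k-1)) *
          ((k : ℝ) + 1) ^ ((n-2).choose k) := by
  obtain ⟨m, rfl⟩ : ∃ m, n = m + 1 := ⟨n - 1, by omega⟩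
  obtain ⟨j, rfl⟩ : ∃ j, k = j + 1 := ⟨k - 1, by omega⟩
  unfold detSq
  split_ifs with h
  · rw [← det_submatrix_equiv_self (Face.castSuccEquiv m (j+1))]
    -- reindexed by `Face.castSuccEquiv`, the selected square submatrix of `∂̂` is one of `bdryHat'`
    refine (sq_det_bdryHat'_submatrix_le (by omega)
      fun σ => (h.some (Face.castSuccEquiv m (j+1) σ)).1).trans_eq ?_
    rw [show m + 1 - 2 = m - 1 by omega, Nat.add_sub_cancel]
    push_cast
    ring
  · positivity

/-- for a ℚ-acyclic complex `T`,
`|H̃_{k−1}(T)|² ≤ ((k+1)/n)^{m₁} (k+1)^{m₂}`. -/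
theorem simple_uniform_bound (n k : ℕ) (hk : 1 ≤ k) (hn : k < n)
    (T : Finset (Face n (k+1))) (hT : T.card = (n-1).choose k)
    (hdet : detSq (colSub (bdryHat n k) T) ≠ 0) :
    detSq (colSub (bdryHat n k) T)
      ≤ (((k : ℝ) + 1) / (n : ℝ)) ^ ((n-2).choose (k-1)) *
          ((k : ℝ) + 1) ^ ((n-2).choose k) :=
  simple_uniform_bound_general n k hk hn T
end

section
/- Let n ≥ k + 2 and let T be a set of (k+1)-element subsets of [n] with |T| = m3 and det ∂̂_{•,T} ≠ 0 (a ℚ-acyclic complex), whose degree sequence d_1 ≤ d_2 ≤ ⋯ ≤ d_n (after relabeling vertices) is increasing, and let i* = min{i ∈ [n] : d_i > m1} (which exists since Σ_i d_i = (k+1)m3 > n·m1). Then the equation Σ_{i∈[n]} (d_i − m1)/(d_i − m1·α) = α⁻¹ has a unique solution α in the interval [d_{i*}/m3, d_n/m3], and this interval is contained in (k/(n−1), 1]. -/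
open Matrix

/-- boundary entries vanish on rows containing a vertex absent from the column. -/
lemma bdryHat_eq_zero_of_mem (n k : ℕ) (σ : HFace n k) (τ : Face n (k+1)) (i : Fin n)
    (hσ : i ∈ σ.1) (hτ : i ∉ τ.1) : bdryHat n k σ τ = 0 := by
  unfold bdryHat bdry
  apply Finset.sum_eq_zero
  intro a _
  rw [if_neg]
  intro hEq
  exact hτ (Finset.mem_of_mem_erase (hEq ▸ hσ))

lemma deg_lower (n k : ℕ) (hk : 1 ≤ k) (hn2 : k + 2 ≤ n)
    (T : Finset (Face n (k+1)))
    (hdet : detSq (colSub (bdryHat n k) T) ≠ 0)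
    (i : Fin n) (hi : (i : ℕ) < n - 1) :
    (n-2).choose (k-1) ≤ deg n k T i := by
  classical
  by_contra hlt
  push_neg at hlt
  unfold detSq at hdet
  split_ifs at hdet with h
  swap
  · exact hdet rfl
  set M := colSub (bdryHat n k) T with hM
  set e := h.some with he
  have hdet' : (M.submatrix id e).det ≠ 0 := by
    intro h0; exact hdet (by rw [h0]; ring)
  -- cardinality of columns containing i
  have hcardC : Fintype.card {t : {τ : Face n (k+1) // τ ∈ T} // i ∈ t.1.1} ≤ deg n k T i := by
    have hinj : Function.Injective
        (fun t : {t : {τ : Face n (k+1) // τ ∈ T} // i ∈ t.1.1} =>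
          (⟨t.1.1, Finset.mem_filter.2 ⟨t.1.2, t.2⟩⟩ :
            {τ : Face n (k+1) // τ ∈ T.filter (fun τ => i ∈ τ.1)})) := by
      intro s t hst
      apply Subtype.ext; apply Subtype.ext
      exact congrArg (fun x : {τ : Face n (k+1) // τ ∈ T.filter (fun τ => i ∈ τ.1)} => x.1) hst
    have := Fintype.card_le_of_injective _ hinj
    rwa [Fintype.card_coe] at this
  -- cardinality of rows containing i
  have hcardR : (n-2).choose (k-1) ≤ Fintype.card {σ : HFace n k // i ∈ σ.1} := by
    set U : Finset (Fin n) := ((Finset.univ : Finset (Fin n)).filter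
        (fun a : Fin n => (a:ℕ) < n - 1)).erase i with hU
    have hiU : i ∉ U := Finset.notMem_erase _ _
    have hUlt : ∀ a ∈ U, (a : ℕ) < n - 1 := by
      intro a ha
      have := Finset.mem_of_mem_erase ha
      exact (Finset.mem_filter.1 this).2
    have hUcard : U.card = n - 2 := by
      rw [hU, Finset.card_erase_of_mem (by simp [hi])]
      have huniv : ((Finset.univ : Finset (Fin n)).filter (fun a : Fin n => (a:ℕ) < n - 1))
          = Finset.univ.erase (⟨n-1, by omega⟩ : Fin n) := by
        ext a
        simp only [Finset.mem_filter, Finset.mem_univ, true_and, Finset.mem_erase, and_true,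
          Ne, Fin.ext_iff]
        have := a.isLt
        omega
      rw [huniv, Finset.card_erase_of_mem (Finset.mem_univ _), Finset.card_univ,
        Fintype.card_fin]
      omega
    have hmem : ∀ s ∈ U.powersetCard (k-1),
        ((insert i s).card = k ∧ ∀ a ∈ insert i s, (a:ℕ) < n - 1) := by
      intro s hs
      obtain ⟨hsub, hcard⟩ := Finset.mem_powersetCard.1 hs
      have his : i ∉ s := fun hmem => hiU (hsub hmem)
      constructor
      · rw [Finset.card_insert_of_notMem his, hcard]; omega
      · intro a ha
        rcases Finset.mem_insert.1 ha with rfl | ha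
        · exact hi
        · exact hUlt a (hsub ha)
    let φ : {s // s ∈ U.powersetCard (k-1)} → {σ : HFace n k // i ∈ σ.1} := fun s =>
      ⟨⟨insert i s.1, hmem s.1 s.2⟩, Finset.mem_insert_self _ _⟩
    have hφ : Function.Injective φ := by
      intro s t hst
      have hins : insert i s.1 = insert i t.1 :=
        congrArg (fun x : {σ : HFace n k // i ∈ σ.1} => x.1.1) hst
      have hs : i ∉ s.1 := fun hh => hiU ((Finset.mem_powersetCard.1 s.2).1 hh)
      have ht : i ∉ t.1 := fun hh => hiU ((Finset.mem_powersetCard.1 t.2).1 hh)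
      apply Subtype.ext
      rw [← Finset.erase_insert hs, ← Finset.erase_insert ht, hins]
    have := Fintype.card_le_of_injective φ hφ
    rwa [Fintype.card_coe, Finset.card_powersetCard, hUcard] at this
  -- the rows containing i are linearly dependent
  have hnli : ¬ LinearIndependent ℝ
      (fun (σ : {σ : HFace n k // i ∈ σ.1}) (c : {t : {τ : Face n (k+1) // τ ∈ T} // i ∈ t.1.1}) =>
        M σ.1 c.1) := by
    intro hli
    have hle := hli.fintype_card_le_finrank
    rw [Module.finrank_pi] at hle
    omega
  rw [Fintype.not_linearIndependent_iff] at hnli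
  obtain ⟨g, hg0, σ₀, hgσ₀⟩ := hnli
  set u : HFace n k → ℝ := fun σ => if hσ : i ∈ σ.1 then g ⟨σ, hσ⟩ else 0 with hu
  have hrow : ∀ t : {τ : Face n (k+1) // τ ∈ T}, ∑ σ : HFace n k, u σ * M σ t = 0 := by
    intro t
    have hsplit : ∑ σ : HFace n k, u σ * M σ t
        = ∑ σ : {σ : HFace n k // i ∈ σ.1}, g σ * M σ.1 t := by
      rw [← Finset.sum_filter_add_sum_filter_not Finset.univ (fun σ : HFace n k => i ∈ σ.1)]
      have h2 : ∑ σ ∈ Finset.univ.filter (fun σ : HFace n k => ¬ i ∈ σ.1), u σ * M σ t = 0 := by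
        apply Finset.sum_eq_zero
        intro σ hσ
        have : ¬ i ∈ σ.1 := (Finset.mem_filter.1 hσ).2
        simp [hu, this]
      rw [h2, add_zero]
      rw [Finset.sum_subtype (p := fun σ : HFace n k => i ∈ σ.1)
        (Finset.univ.filter (fun σ : HFace n k => i ∈ σ.1))
        (by intro x; simp) (fun σ => u σ * M σ t)]
      apply Finset.sum_congr rfl
      intro σ _
      simp [hu, σ.2]
    rw [hsplit]
    by_cases ht : i ∈ t.1.1
    · have hfun := congrFun hg0 ⟨t, ht⟩
      simpa [Finset.sum_apply, smul_eq_mul] using hfun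
    · apply Finset.sum_eq_zero
      intro σ _
      have : M σ.1 t = 0 := bdryHat_eq_zero_of_mem n k σ.1 t.1 i σ.2 ht
      rw [this, mul_zero]
  have hvm : Matrix.vecMul u (M.submatrix id e) = 0 := by
    funext j
    simp only [Pi.zero_apply]
    have : Matrix.vecMul u (M.submatrix id e) j = ∑ σ : HFace n k, u σ * M σ (e j) := by
      simp [Matrix.vecMul, dotProduct, Matrix.submatrix_apply]
    rw [this]
    exact hrow (e j)
  have huz : u = 0 := Matrix.eq_zero_of_vecMul_eq_zero hdet' hvm
  have : u σ₀.1 = 0 := congrFun huz σ₀.1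
  rw [hu] at this
  simp only [σ₀.2, dif_pos] at this
  exact hgσ₀ (by simpa using this)



lemma choose_id_aux (n k : ℕ) (hk : 1 ≤ k) (hn2 : k + 2 ≤ n) :
    k * (n-1).choose k = (n-1) * (n-2).choose (k-1) := by
  obtain ⟨m, rfl⟩ : ∃ m, n = m + 2 := ⟨n-2, by omega⟩
  obtain ⟨j, rfl⟩ : ∃ j, k = j + 1 := ⟨k-1, by omega⟩
  simp only [Nat.add_sub_cancel, show m+2-1 = m+1 from rfl, show m+2-2 = m from rfl]
  have h := Nat.add_one_mul_choose_eq m j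
  rw [h]
  ring

lemma analytic_core (N : ℕ) (d : Fin N → ℝ) (m1 m3 : ℝ)
    (hm1 : 0 < m1) (hm13 : m1 < m3)
    (hsum : ∑ i, (d i - m1) = m3 - m1)
    (hub : ∀ i, d i ≤ m3)
    (istar last : Fin N) (histar : m1 < d istar)
    (hdlast : ∀ i, d i ≤ d last)
    (hdich : ∀ i, d i = m1 ∨ (m1 < d i ∧ d istar ≤ d i)) :
    (∃! α : ℝ, α ∈ Set.Icc (d istar / m3) (d last / m3) ∧
        (∑ i, (d i - m1) / (d i - m1 * α)) = α⁻¹) ∧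
      Set.Icc (d istar / m3) (d last / m3) ⊆ Set.Ioc (m1 / m3) 1 := by
  have hm3 : 0 < m3 := hm1.trans hm13
  set a := d istar / m3 with ha
  set b := d last / m3 with hb
  have hdistar : 0 < d istar := hm1.trans histar
  have hdlastpos : m1 < d last := lt_of_lt_of_le histar (hdlast istar)
  have hab : a ≤ b := by
    rw [ha, hb, div_le_div_iff_of_pos_right hm3]
    exact hdlast istar
  have ha_pos : 0 < a := div_pos hdistar hm3
  have hb1 : b ≤ 1 := (div_le_one hm3).2 (hub last)
  have hsubset : Set.Icc a b ⊆ Set.Ioc (m1 / m3) 1 := by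
    intro x hx
    refine ⟨lt_of_lt_of_le ?_ hx.1, hx.2.trans hb1⟩
    rw [ha, div_lt_div_iff_of_pos_right hm3]
    exact histar
  have hden : ∀ x ∈ Set.Icc a b, ∀ i, m1 < d i → 0 < d i - m1 * x := by
    intro x hx i hi
    have hx1 : x ≤ 1 := hx.2.trans hb1
    nlinarith
  set F : ℝ → ℝ := fun x => (∑ i, (d i - m1) / (d i - m1 * x)) - x⁻¹ with hF
  have hFmono : StrictMonoOn F (Set.Icc a b) := by
    intro x hx y hy hxy
    have h1 : (∑ i, (d i - m1) / (d i - m1 * x)) ≤ ∑ i, (d i - m1) / (d i - m1 * y) := by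
      apply Finset.sum_le_sum
      intro i _
      rcases hdich i with h | ⟨h, _⟩
      · rw [h]; simp
      · have hdx := hden x hx i h
        have hdy := hden y hy i h
        apply div_le_div_of_nonneg_left (by linarith) hdy
        nlinarith [hxy.le]
    have h2 : y⁻¹ < x⁻¹ := by
      apply inv_strictAnti₀ (lt_of_lt_of_le ha_pos hx.1) hxy
    simp only [hF]
    linarith
  have hcont : ContinuousOn F (Set.Icc a b) := by
    apply ContinuousOn.sub
    · apply continuousOn_finset_sum
      intro i _
      rcases hdich i with h | ⟨h, _⟩
      · simp only [h, sub_self, zero_div]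
        exact continuousOn_const
      · exact continuousOn_const.div
          ((continuous_const.sub (continuous_const.mul continuous_id)).continuousOn)
          (fun x hx => ne_of_gt (hden x hx i h))
    · exact ContinuousOn.inv₀ continuousOn_id
        (fun x hx => ne_of_gt (lt_of_lt_of_le ha_pos hx.1))
  have hamem : a ∈ Set.Icc a b := ⟨le_refl a, hab⟩
  have hbmem : b ∈ Set.Icc a b := ⟨hab, le_refl b⟩
  have hFa : F a ≤ 0 := by
    have hda : 0 < d istar - m1 * a := hden a hamem istar histar
    have key : ∀ i : Fin N, (d i - m1) / (d i - m1 * a) ≤ (d i - m1) / (d istar - m1 * a) := by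
      intro i
      rcases hdich i with h | ⟨h, h'⟩
      · rw [h]; simp
      · exact div_le_div_of_nonneg_left (by linarith) hda (by nlinarith)
    have h1 : (∑ i, (d i - m1) / (d i - m1 * a)) ≤ (m3 - m1) / (d istar - m1 * a) := by
      calc (∑ i, (d i - m1) / (d i - m1 * a)) ≤ ∑ i, (d i - m1) / (d istar - m1 * a) :=
            Finset.sum_le_sum (fun i _ => key i)
        _ = (∑ i, (d i - m1)) / (d istar - m1 * a) := by rw [Finset.sum_div]
        _ = (m3 - m1) / (d istar - m1 * a) := by rw [hsum]
    have h2 : (m3 - m1) / (d istar - m1 * a) = a⁻¹ := by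
      rw [ha, inv_div, div_eq_div_iff hda.ne' hdistar.ne', ha]
      field_simp
    simp only [hF]
    rw [← h2]
    linarith
  have hFb : 0 ≤ F b := by
    have hdb : 0 < d last - m1 * b := hden b hbmem last hdlastpos
    have key : ∀ i : Fin N, (d i - m1) / (d last - m1 * b) ≤ (d i - m1) / (d i - m1 * b) := by
      intro i
      rcases hdich i with h | ⟨h, _⟩
      · rw [h]; simp
      · exact div_le_div_of_nonneg_left (by linarith) (hden b hbmem i h)
          (by nlinarith [hdlast i])
    have h1 : (m3 - m1) / (d last - m1 * b) ≤ ∑ i, (d i - m1) / (d i - m1 * b) := by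
      calc (m3 - m1) / (d last - m1 * b) = (∑ i, (d i - m1)) / (d last - m1 * b) := by rw [hsum]
        _ = ∑ i, (d i - m1) / (d last - m1 * b) := by rw [Finset.sum_div]
        _ ≤ ∑ i, (d i - m1) / (d i - m1 * b) := Finset.sum_le_sum (fun i _ => key i)
    have h2 : (m3 - m1) / (d last - m1 * b) = b⁻¹ := by
      rw [hb, inv_div, div_eq_div_iff hdb.ne' (hm1.trans hdlastpos).ne', hb]
      field_simp
    simp only [hF]
    rw [← h2]
    linarith
  obtain ⟨α, hαmem, hα0⟩ := intermediate_value_Icc hab hcont ⟨hFa, hFb⟩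
  have hαeq : (∑ i, (d i - m1) / (d i - m1 * α)) = α⁻¹ := by
    have := sub_eq_zero.mp hα0
    exact this
  refine ⟨⟨α, ⟨hαmem, hαeq⟩, ?_⟩, hsubset⟩
  rintro β ⟨hβmem, hβeq⟩
  have hFβ : F β = 0 := sub_eq_zero.2 hβeq
  exact hFmono.injOn hβmem hαmem (by rw [hFβ, hα0])

lemma sum_deg_eq (n k : ℕ) (T : Finset (Face n (k+1))) :
    ∑ i : Fin n, deg n k T i = (k+1) * T.card := by
  unfold deg
  simp only [Finset.card_filter]
  rw [Finset.sum_comm]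
  have h : ∀ τ : Face n (k+1), τ ∈ T → (∑ i : Fin n, if i ∈ τ.1 then 1 else 0) = k + 1 := by
    intro τ _
    rw [Finset.sum_ite_mem, Finset.univ_inter, Finset.sum_const, τ.2, smul_eq_mul, mul_one]
  rw [Finset.sum_congr rfl h, Finset.sum_const, smul_eq_mul, mul_comm]

/-- setup of Corollary 5: for a ℚ-acyclic complex `T` with
increasing degree sequence, the index `i* = min{i : dᵢ > m₁}` exists, the
equation `Σᵢ (dᵢ−m₁)/(dᵢ−m₁α) = α⁻¹` has a unique solution `α` in the interval
`[d_{i*}/m₃, d_n/m₃]`, and this interval is contained in `(k/(n−1), 1]`. -/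
theorem alpha_exists_unique (n k : ℕ) (hk : 1 ≤ k) (hn2 : k + 2 ≤ n)
    (T : Finset (Face n (k+1))) (hT : T.card = (n-1).choose k)
    (hdet : detSq (colSub (bdryHat n k) T) ≠ 0)
    (hsort : Monotone (fun i : Fin n => deg n k T i)) :
    (∃ i : Fin n, (n-2).choose (k-1) < deg n k T i) ∧
    ∀ istar : Fin n, (n-2).choose (k-1) < deg n k T istar →
      (∀ j : Fin n, (n-2).choose (k-1) < deg n k T j → istar ≤ j) →
      ((∃! α : ℝ,
          α ∈ Set.Icc ((deg n k T istar : ℝ) / ((n-1).choose k : ℝ))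
              ((deg n k T ⟨n-1, by omega⟩ : ℝ) / ((n-1).choose k : ℝ)) ∧
          (∑ i, ((deg n k T i : ℝ) - ((n-2).choose (k-1) : ℝ)) /
              ((deg n k T i : ℝ) - ((n-2).choose (k-1) : ℝ) * α)) = α⁻¹) ∧
        Set.Icc ((deg n k T istar : ℝ) / ((n-1).choose k : ℝ))
            ((deg n k T ⟨n-1, by omega⟩ : ℝ) / ((n-1).choose k : ℝ)) ⊆
          Set.Ioc ((k : ℝ) / ((n : ℝ) - 1)) 1) := by
  have hm1pos : 0 < (n-2).choose (k-1) := Nat.choose_pos (by omega)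
  have hm3pos : 0 < (n-1).choose k := Nat.choose_pos (by omega)
  have hid : k * (n-1).choose k = (n-1) * (n-2).choose (k-1) := choose_id_aux n k hk hn2
  have hm13 : (n-2).choose (k-1) < (n-1).choose k := by
    have h2 : k * (n-2).choose (k-1) < k * (n-1).choose k := by
      calc k * (n-2).choose (k-1) < (k+1) * (n-2).choose (k-1) := by nlinarith [hm1pos]
        _ ≤ (n-1) * (n-2).choose (k-1) := Nat.mul_le_mul_right _ (by omega)
        _ = k * (n-1).choose k := hid.symm
    exact Nat.lt_of_mul_lt_mul_left h2
  have hsumdeg : ∑ i : Fin n, deg n k T i = (k+1) * (n-1).choose k := by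
    rw [sum_deg_eq, hT]
  have hub : ∀ i : Fin n, deg n k T i ≤ (n-1).choose k := by
    intro i; rw [← hT]; exact Finset.card_filter_le _ _
  have hex : ∃ i : Fin n, (n-2).choose (k-1) < deg n k T i := by
    by_contra hc
    push_neg at hc
    have h1 : ∑ i : Fin n, deg n k T i ≤ n * (n-2).choose (k-1) := by
      calc ∑ i : Fin n, deg n k T i ≤ ∑ _i : Fin n, (n-2).choose (k-1) :=
            Finset.sum_le_sum (fun i _ => hc i)
        _ = n * (n-2).choose (k-1) := by
            rw [Finset.sum_const, Finset.card_univ, Fintype.card_fin, smul_eq_mul]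
    have hkey : k * (n * (n-2).choose (k-1)) < k * ((k+1) * (n-1).choose k) := by
      calc k * (n * (n-2).choose (k-1)) = (k*n) * (n-2).choose (k-1) := by ring
        _ < ((k+1)*(n-1)) * (n-2).choose (k-1) := by
            have hlt : k*n < (k+1)*(n-1) := by
              obtain ⟨m, rfl⟩ : ∃ m, n = k + 2 + m := ⟨n - (k+2), by omega⟩
              have h9 : k + 2 + m - 1 = k + 1 + m := by omega
              rw [h9]
              nlinarith
            exact Nat.mul_lt_mul_of_lt_of_le hlt (le_refl _) hm1pos
        _ = (k+1) * ((n-1) * (n-2).choose (k-1)) := by ring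
        _ = (k+1) * (k * (n-1).choose k) := by rw [hid]
        _ = k * ((k+1) * (n-1).choose k) := by ring
    have hfin := Nat.lt_of_mul_lt_mul_left hkey
    omega
  refine ⟨hex, ?_⟩
  intro istar hstar hmin
  have hdich : ∀ i : Fin n, deg n k T i = (n-2).choose (k-1) ∨
      ((n-2).choose (k-1) < deg n k T i ∧ deg n k T istar ≤ deg n k T i) := by
    intro i
    by_cases hc : (n-2).choose (k-1) < deg n k T i
    · exact Or.inr ⟨hc, hsort (hmin i hc)⟩
    · push_neg at hc
      left
      refine le_antisymm hc (deg_lower n k hk hn2 T hdet i ?_)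
      by_contra hni
      have hilt := i.isLt
      have hle : istar ≤ i := by
        rw [Fin.le_def]
        have := istar.isLt
        omega
      have h5 : deg n k T istar ≤ deg n k T i := hsort hle
      omega
  have hlastle : ∀ j : Fin n, j ≤ (⟨n-1, by omega⟩ : Fin n) := by
    intro j
    rw [Fin.le_def]
    have := j.isLt
    simp
    omega
  -- cast facts to ℝ
  have hidR : (k:ℝ) * ((n-1).choose k : ℝ) = (n:ℝ) * ((n-2).choose (k-1) : ℝ)
      - ((n-2).choose (k-1) : ℝ) := by
    have h7 : ((n-1:ℕ):ℝ) = (n:ℝ) - 1 := by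
      rw [Nat.cast_sub (by omega : 1 ≤ n)]; simp
    have h8 : (k:ℝ) * ((n-1).choose k : ℝ) = ((n-1:ℕ):ℝ) * ((n-2).choose (k-1) : ℝ) := by
      exact_mod_cast hid
    rw [h8, h7]; ring
  have hsR : ∑ i : Fin n, ((deg n k T i : ℝ) - ((n-2).choose (k-1) : ℝ))
      = ((n-1).choose k : ℝ) - ((n-2).choose (k-1) : ℝ) := by
    rw [Finset.sum_sub_distrib, Finset.sum_const, Finset.card_univ, Fintype.card_fin,
      nsmul_eq_mul]
    have h6 : ∑ i : Fin n, (deg n k T i : ℝ) = ((k:ℝ)+1) * ((n-1).choose k : ℝ) := by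
      rw [← Nat.cast_sum, hsumdeg]
      push_cast
      ring
    rw [h6]
    linear_combination hidR
  have hubR : ∀ i : Fin n, (deg n k T i : ℝ) ≤ ((n-1).choose k : ℝ) :=
    fun i => by exact_mod_cast hub i
  have histarR : ((n-2).choose (k-1) : ℝ) < (deg n k T istar : ℝ) := by exact_mod_cast hstar
  have hdlastR : ∀ i : Fin n, (deg n k T i : ℝ) ≤ (deg n k T (⟨n-1, by omega⟩ : Fin n) : ℝ) := by
    intro i
    have h10 : deg n k T i ≤ deg n k T (⟨n-1, by omega⟩ : Fin n) := hsort (hlastle i)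
    exact_mod_cast h10
  have hdichR : ∀ i : Fin n, (deg n k T i : ℝ) = ((n-2).choose (k-1) : ℝ) ∨
      (((n-2).choose (k-1) : ℝ) < (deg n k T i : ℝ) ∧
        (deg n k T istar : ℝ) ≤ (deg n k T i : ℝ)) := by
    intro i
    rcases hdich i with h | ⟨h1, h2⟩
    · exact Or.inl (by exact_mod_cast h)
    · exact Or.inr ⟨by exact_mod_cast h1, by exact_mod_cast h2⟩
  have hcore := analytic_core n (fun i => (deg n k T i : ℝ))
      ((n-2).choose (k-1) : ℝ) ((n-1).choose k : ℝ)
      (by exact_mod_cast hm1pos) (by exact_mod_cast hm13) hsR hubR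
      istar ⟨n-1, by omega⟩ histarR hdlastR hdichR
  have hbd : ((n-2).choose (k-1) : ℝ) / ((n-1).choose k : ℝ) = (k:ℝ) / ((n:ℝ)-1) := by
    have hne1 : (n:ℝ) - 1 ≠ 0 := by
      have : (1:ℝ) < (n:ℝ) := by exact_mod_cast (by omega : 1 < n)
      intro hc; linarith
    have hm3ne : ((n-1).choose k : ℝ) ≠ 0 := by
      exact_mod_cast hm3pos.ne'
    rw [div_eq_div_iff hm3ne hne1]
    linear_combination -hidR
  rw [← hbd]
  exact hcore
end
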